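/- arXiv:1911.11006 — 5 statements merged into one kernel-verified Lean document; each statement's English description precedes it below -/
import Mathlib

section
/- Let μ = (μ₁, …, μₙ) be a collection of complex numbers. Then the convex hull of {μ₁, …, μₙ} in the complex plane does not contain 0 (i.e., μ belongs to the Poincaré domain) if and only if there exists a constant c > 0 such that for every multi-index α = (α₁, …, αₙ) of nonnegative integers with |α| = α₁ + ⋯ + αₙ ≥ 1, one has |α₁μ₁ + ⋯ + αₙμₙ| ≥ c·|α|. -/
/-!
If `0` lies outside the convex hull `K` of the `μᵢ`, then `∑ αᵢ μᵢ / |α|` is a point of `K`, so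
`‖∑ αᵢ μᵢ‖ ≥ dist(0, K) · |α|` with `dist(0, K) > 0` because `K` is compact.
Conversely, if `∑ tᵢ μᵢ = 0` for a probability vector `t`, rounding `M tᵢ` down to integers `αᵢ`
gives multi-indices with `|α| ≥ M - n` but `‖∑ αᵢ μᵢ‖ ≤ ∑ ‖μᵢ‖`, which no linear lower bound
survives as `M → ∞`.
-/

open Set Metric

section ConvexHull

variable {ι R E : Type*} [Fintype ι] [Field R] [LinearOrder R] [IsStrictOrderedRing R]
  [AddCommGroup E] [Module R E]

theorem exists_sum_smul_eq_of_mem_convexHull_range {v : ι → E} {x : E}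
    (hx : x ∈ convexHull R (range v)) :
    ∃ t : ι → R, (∀ i, 0 ≤ t i) ∧ ∑ i, t i = 1 ∧ ∑ i, t i • v i = x := by
  classical
  rw [convexHull_range_eq_exists_affineCombination] at hx
  obtain ⟨s, w, hw₀, hw₁, rfl⟩ := hx
  have hw₁' : ∑ i, (s : Set ι).indicator w i = 1 := by
    rwa [Finset.sum_indicator_subset _ s.subset_univ]
  refine ⟨(s : Set ι).indicator w, indicator_nonneg hw₀, hw₁', ?_⟩
  rw [Finset.affineCombination_indicator_subset _ _ s.subset_univ,
      Finset.affineCombination_eq_linear_combination _ _ _ hw₁']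

end ConvexHull

section NormedSpace

variable {ι E : Type*} [Fintype ι] [NormedAddCommGroup E] [NormedSpace ℝ E]

theorem infDist_zero_convexHull_mul_sum_le_norm_sum_smul (v : ι → E) {w : ι → ℝ}
    (hw : ∀ i, 0 ≤ w i) :
    infDist 0 (convexHull ℝ (range v)) * ∑ i, w i ≤ ‖∑ i, w i • v i‖ := by
  rcases (Finset.sum_nonneg fun i _ => hw i).eq_or_lt with hW | hW
  · rw [← hW, mul_zero]
    exact norm_nonneg _
  have hmem : Finset.univ.centerMass w v ∈ convexHull ℝ (range v) :=
    Finset.centerMass_mem_convexHull _ (fun i _ => hw i) hW fun i _ => mem_range_self i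
  have hdist := infDist_le_dist_of_mem (x := 0) hmem
  rw [dist_zero_left, Finset.centerMass, norm_smul, Real.norm_of_nonneg (inv_nonneg.2 hW.le),
    inv_mul_eq_div, le_div_iff₀ hW] at hdist
  exact hdist

theorem exists_pos_mul_sum_le_norm_sum_smul_of_zero_notMem_convexHull {v : ι → E}
    (h : (0 : E) ∉ convexHull ℝ (range v)) :
    ∃ c > 0, ∀ w : ι → ℝ, (∀ i, 0 ≤ w i) → c * ∑ i, w i ≤ ‖∑ i, w i • v i‖ := by
  rcases isEmpty_or_nonempty ι with _ | ⟨⟨i⟩⟩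
  · exact ⟨1, one_pos, fun w _ => by simp⟩
  have hne : (convexHull ℝ (range v)).Nonempty :=
    ⟨v i, subset_convexHull ℝ _ (mem_range_self i)⟩
  exact ⟨_, ((finite_range v).isClosed_convexHull ℝ |>.notMem_iff_infDist_pos hne).1 h,
    fun w hw => infDist_zero_convexHull_mul_sum_le_norm_sum_smul v hw⟩

theorem norm_sum_natFloor_smul_sub_sum_smul_le (v : ι → E) {x : ι → ℝ} (hx : ∀ i, 0 ≤ x i) :
    ‖∑ i, ⌊x i⌋₊ • v i - ∑ i, x i • v i‖ ≤ ∑ i, ‖v i‖ := by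
  rw [← Finset.sum_sub_distrib]
  refine (norm_sum_le _ _).trans (Finset.sum_le_sum fun i _ => ?_)
  rw [← Nat.cast_smul_eq_nsmul ℝ, ← sub_smul, norm_smul]
  refine mul_le_of_le_one_left (norm_nonneg _) ?_
  rw [Real.norm_eq_abs, abs_sub_comm, abs_of_nonneg (sub_nonneg.2 (Nat.floor_le (hx i)))]
  linarith [Nat.lt_floor_add_one (x i)]

theorem sum_sub_card_le_sum_natFloor (x : ι → ℝ) :
    ∑ i, x i - Fintype.card ι ≤ ∑ i, (⌊x i⌋₊ : ℝ) := by
  rw [← nsmul_one, ← Finset.card_univ, ← Finset.sum_const, ← Finset.sum_sub_distrib]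
  exact Finset.sum_le_sum fun i _ => (Nat.sub_one_lt_floor (x i)).le

theorem exists_nat_weights_of_zero_mem_convexHull {v : ι → E}
    (h : (0 : E) ∈ convexHull ℝ (range v)) (N : ℕ) :
    ∃ a : ι → ℕ, N ≤ ∑ i, a i ∧ ‖∑ i, a i • v i‖ ≤ ∑ i, ‖v i‖ := by
  obtain ⟨t, ht₀, ht₁, htv⟩ := exists_sum_smul_eq_of_mem_convexHull_range h
  set M : ℝ := N + Fintype.card ι
  have hM : 0 ≤ M := by positivity
  refine ⟨fun i => ⌊t i * M⌋₊, ?_, ?_⟩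
  · have := sum_sub_card_le_sum_natFloor fun i => t i * M
    rw [← Finset.sum_mul, ht₁, one_mul] at this
    exact_mod_cast (show (N : ℝ) ≤ ∑ i, (⌊t i * M⌋₊ : ℝ) by linarith)
  · have hzero : ∑ i, (t i * M) • v i = 0 := by
      simp_rw [mul_comm (t _) M, mul_smul, ← Finset.smul_sum, htv, smul_zero]
    simpa [hzero] using
      norm_sum_natFloor_smul_sub_sum_smul_le v fun i => mul_nonneg (ht₀ i) hM

end NormedSpace

/-- Poincaré domain characterization: 0 is not in the convex hull of the
eigenvalues iff the linear combinations with nonnegative-integer coefficients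
are bounded below linearly in the length of the multi-index. -/
theorem poincare_domain_iff (n : ℕ) (μ : Fin n → ℂ) :
    (0 : ℂ) ∉ convexHull ℝ (Set.range μ) ↔
      ∃ c : ℝ, 0 < c ∧ ∀ α : Fin n → ℕ, 1 ≤ ∑ i, α i →
        c * ((∑ i, α i : ℕ) : ℝ) ≤ ‖∑ i, (α i : ℂ) * μ i‖ := by
  simp_rw [← nsmul_eq_mul]
  constructor
  · intro h
    obtain ⟨c, hc, hbound⟩ := exists_pos_mul_sum_le_norm_sum_smul_of_zero_notMem_convexHull h
    refine ⟨c, hc, fun α _ => ?_⟩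
    simpa [Nat.cast_smul_eq_nsmul] using hbound (fun i => α i) fun i => Nat.cast_nonneg _
  · rintro ⟨c, hc, hbound⟩ h
    set B := ∑ i, ‖μ i‖
    obtain ⟨α, hαN, hαB⟩ := exists_nat_weights_of_zero_mem_convexHull h (⌊B / c⌋₊ + 1)
    have hBc : B < c * ((∑ i, α i : ℕ) : ℝ) := by
      rw [← div_lt_iff₀' hc]
      exact (Nat.lt_floor_add_one _).trans_le (by exact_mod_cast hαN)
    exact (hbound α (by omega)).not_gt (hαB.trans_lt hBc)
end

section
/- Let m ≥ 2 be an integer and c_m ≠ 0 a real number. Suppose w : (−∞, τ₀] → ℝ is a differentiable solution of w′ = c_m w^m + g(w) where |g(w)| ≤ C|w|^{m+1} for small |w|, with w(τ) > 0 for all τ and w(τ) → 0+ as τ → −∞. Then lim_{τ→−∞} τ·w(τ)^{m−1} = 1/((1−m)c_m); in particular c_m > 0 when m is even and w(τ) = ((1/((1−m)c_m τ))^{1/(m−1)})·(1 + o(1)) as τ → −∞. -/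
/-!
With `u = w^{-(m-1)}` the equation becomes `u' = (1 - m) c + O(w)`, and `w → 0`, so `u'`
tends to `(1 - m) c`. By the mean value theorem `u τ / τ` then has the same limit, and inverting
gives the decay rate. Since `τ w^{m-1} ≤ 0` for `τ ≤ 0`, the limit `1 / ((1 - m) c)` is
nonpositive, which forces `c > 0`.
-/

open Filter Topology Asymptotics

theorem isLittleO_id_atBot_of_hasDerivAt {v v' : ℝ → ℝ} {a : ℝ}
    (hv : ∀ x ≤ a, HasDerivAt v (v' x) x) (hv' : Tendsto v' atBot (𝓝 0)) :
    v =o[atBot] id := by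
  refine IsLittleO.of_bound fun ε hε => ?_
  obtain ⟨b, hb⟩ := eventually_atBot.1 <|
    hv'.norm.eventually_le_const (u := ε / 2) (by simpa using half_pos hε)
  set b' := min a b
  have hslope : ∀ x ≤ b', ‖v x - v b'‖ ≤ ε / 2 * ‖x - b'‖ := fun x hx =>
    (convex_Iic b').norm_image_sub_le_of_norm_hasDerivWithin_le
      (fun y hy => (hv y (hy.trans (min_le_left _ _))).hasDerivWithinAt)
      (fun y hy => hb y (hy.trans (min_le_right _ _))) (le_refl b') hx
  have hfar : ∀ᶠ x : ℝ in atBot, ‖v b'‖ + ε / 2 * ‖b'‖ ≤ ε / 2 * ‖x‖ := by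
    simpa only [Real.norm_eq_abs] using
      (tendsto_abs_atBot_atTop.const_mul_atTop (half_pos hε)).eventually_ge_atTop _
  filter_upwards [eventually_le_atBot b', hfar] with x hx hxfar
  calc ‖v x‖ ≤ ‖v x - v b'‖ + ‖v b'‖ := norm_le_norm_sub_add _ _
    _ ≤ ε / 2 * (‖x‖ + ‖b'‖) + ‖v b'‖ := by
      gcongr
      exact (hslope x hx).trans (by gcongr; exact norm_sub_le _ _)
    _ ≤ ε * ‖id x‖ := by simp only [id]; linarith

theorem tendsto_div_atBot_of_hasDerivAt {u u' : ℝ → ℝ} {a L : ℝ}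
    (hu : ∀ x ≤ a, HasDerivAt u (u' x) x) (hu' : Tendsto u' atBot (𝓝 L)) :
    Tendsto (fun x => u x / x) atBot (𝓝 L) := by
  have hsub : (fun x => u x - L * x) =o[atBot] id :=
    isLittleO_id_atBot_of_hasDerivAt (fun x hx => (hu x hx).sub ((hasDerivAt_id x).const_mul L))
      (by simpa using hu'.sub_const L)
  refine (zero_add L ▸ hsub.tendsto_div_nhds_zero.add_const L).congr' ?_
  filter_upwards [eventually_lt_atBot 0] with x hx
  rw [id, sub_div, mul_div_cancel_right₀ _ hx.ne, sub_add_cancel]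

theorem tendsto_div_pow_nhdsNE_zero {g : ℝ → ℝ} {C δ : ℝ} {m : ℕ} (hδ : 0 < δ)
    (hg : ∀ x, |x| ≤ δ → |g x| ≤ C * |x| ^ (m + 1)) :
    Tendsto (fun x => g x / x ^ m) (𝓝[≠] 0) (𝓝 0) := by
  have hC : Tendsto (fun x : ℝ => C * |x|) (𝓝 0) (𝓝 0) := by
    simpa using (continuous_abs.tendsto (0 : ℝ)).const_mul C
  refine squeeze_zero_norm' ?_ (hC.mono_left nhdsWithin_le_nhds)
  filter_upwards [mem_nhdsWithin_of_mem_nhds (Metric.closedBall_mem_nhds (0 : ℝ) hδ),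
    self_mem_nhdsWithin] with x hxδ hx0
  have hxm : 0 < |x| ^ m := pow_pos (abs_pos.2 hx0) m
  rw [Real.norm_eq_abs, abs_div, abs_pow, div_le_iff₀ hxm]
  calc |g x| ≤ C * |x| ^ (m + 1) := hg x (by simpa using hxδ)
    _ = C * |x| * |x| ^ m := by ring

theorem HasDerivAt.inv_pow {f : ℝ → ℝ} {f' x : ℝ} (hf : HasDerivAt f f' x) (hx : f x ≠ 0)
    (n : ℕ) : HasDerivAt (fun y => (f y ^ n)⁻¹) (-n * f' / f x ^ (n + 1)) x := by
  refine ((hf.pow n).inv (pow_ne_zero n hx)).congr_deriv ?_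
  rcases n with _ | n
  · simp
  · simp only [Pi.pow_apply, Nat.add_sub_cancel]
    field_simp
    ring

theorem decay_rate_one_dim_center_general (m : ℕ) (hm : 2 ≤ m) (c : ℝ) (hc : c ≠ 0)
    (C δ τ₀ : ℝ) (hδ : 0 < δ) (w g : ℝ → ℝ)
    (hw : ∀ τ ≤ τ₀, HasDerivAt w (c * w τ ^ m + g (w τ)) τ)
    (hg : ∀ x : ℝ, |x| ≤ δ → |g x| ≤ C * |x| ^ (m + 1))
    (hpos : ∀ τ ≤ τ₀, 0 < w τ)
    (hlim : Tendsto w atBot (nhds 0)) :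
    Tendsto (fun τ => τ * w τ ^ (m - 1)) atBot (nhds (1 / ((1 - (m : ℝ)) * c)))
    ∧ (Even m → 0 < c) := by
  obtain ⟨n, rfl⟩ : ∃ n, m = n + 1 := ⟨m - 1, by omega⟩
  have hn : (0 : ℝ) < n := by exact_mod_cast (by omega : 0 < n)
  rw [Nat.add_sub_cancel, Nat.cast_add_one, show 1 - ((n : ℝ) + 1) = -n by ring]
  have hw0 : Tendsto w atBot (𝓝[≠] 0) := tendsto_nhdsWithin_iff.2
    ⟨hlim, (eventually_le_atBot τ₀).mono fun τ hτ => (hpos τ hτ).ne'⟩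
  have hu : ∀ τ ≤ τ₀, HasDerivAt (fun s => (w s ^ n)⁻¹)
      (-n * c - n * (g (w τ) / w τ ^ (n + 1))) τ := fun τ hτ =>
    ((hw τ hτ).inv_pow (hpos τ hτ).ne' n).congr_deriv <| by
      field_simp [(hpos τ hτ).ne']
      ring
  have hu' : Tendsto (fun τ => -n * c - n * (g (w τ) / w τ ^ (n + 1))) atBot
      (𝓝 (-n * c)) := by
    simpa using
      (((tendsto_div_pow_nhdsNE_zero hδ hg).comp hw0).const_mul (n : ℝ)).const_sub (-n * c)
  have hlimit : Tendsto (fun τ => τ * w τ ^ n) atBot (𝓝 (1 / (-n * c))) := by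
    rw [one_div]
    convert (tendsto_div_atBot_of_hasDerivAt hu hu').inv₀ (by simp [hn.ne', hc]) using 2 with τ
    rw [inv_div, div_inv_eq_mul]
  refine ⟨hlimit, fun _ => ?_⟩
  have hnonpos : 1 / (-n * c) ≤ 0 := le_of_tendsto hlimit <| by
    filter_upwards [eventually_le_atBot (min τ₀ 0)] with τ hτ
    exact mul_nonpos_of_nonpos_of_nonneg (hτ.trans (min_le_right _ _))
      (pow_pos (hpos τ (hτ.trans (min_le_left _ _))) n).le
  have hc0 : 0 ≤ c := by nlinarith [one_div_nonpos.1 hnonpos]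
  exact hc0.lt_of_ne' hc

/-- Decay rate of a positive solution of w′ = c_m w^m + O(w^{m+1}) tending to
0 as τ → −∞: τ·w^{m−1} → 1/((1−m)c_m); in particular c_m > 0 if m is even. -/
theorem decay_rate_one_dim_center (m : ℕ) (hm : 2 ≤ m) (c : ℝ) (hc : c ≠ 0)
    (C δ τ₀ : ℝ) (hC : 0 < C) (hδ : 0 < δ) (w g : ℝ → ℝ)
    (hw : ∀ τ ≤ τ₀, HasDerivAt w (c * w τ ^ m + g (w τ)) τ)
    (hg : ∀ x : ℝ, |x| ≤ δ → |g x| ≤ C * |x| ^ (m + 1))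
    (hpos : ∀ τ ≤ τ₀, 0 < w τ)
    (hlim : Tendsto w atBot (nhds 0)) :
    Tendsto (fun τ => τ * w τ ^ (m - 1)) atBot (nhds (1 / ((1 - (m : ℝ)) * c)))
    ∧ (Even m → 0 < c) :=
  decay_rate_one_dim_center_general m hm c hc C δ τ₀ hδ w g hw hg hpos hlim
end

section
/- Suppose Φ, Ψ : ℝ → ℝ are continuous with Ψ(ϑ₀) = 0 and Φ(ϑ₀) ≠ 0, and ρ : (−∞, τ₀] → (0, ∞), ϑ : (−∞, τ₀] → ℝ are differentiable with ρ(τ) → 0, ϑ(τ) → ϑ₀ as τ → −∞, satisfying ρ′ = ρ^m Φ(ϑ) + g(τ) where m ≥ 2 and |g(τ)| ≤ ε(τ)·ρ(τ)^m with ε(τ) → 0 as τ → −∞. Then lim_{τ→−∞} 1/(τ·ρ(τ)^{m−1}) = (1 − m)·Φ(ϑ₀); in particular ρ(τ) = ((m−1)Φ(ϑ₀))^{−1/(m−1)}·(−τ)^{−1/(m−1)}·(1 + o(1)). -/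
/-!
Put `F = ρ^{-(m-1)}`. Along the orbit `F' = -(m-1) ρ'/ρ^m = -(m-1) (Φ(ϑ) + g/ρ^m)`, which tends to
`(1-m) Φ(ϑ₀)` because `ϑ → ϑ₀` and `|g|/ρ^m ≤ ε → 0`. A function whose derivative has a limit `L`
at `-∞` grows like `L τ` (mean value theorem applied to `F - L τ`), so `F(τ)/τ = 1/(τ ρ^{m-1})`
tends to the same limit.
-/

open Filter Asymptotics Topology

theorem isLittleO_id_atBot_of_tendsto_deriv_zero {E : Type*} [NormedAddCommGroup E]
    [NormedSpace ℝ E] {h h' : ℝ → E} (hd : ∀ᶠ τ in atBot, HasDerivAt h (h' τ) τ)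
    (h'0 : Tendsto h' atBot (𝓝 0)) : h =o[atBot] id := by
  refine IsLittleO.of_bound fun c hc => ?_
  obtain ⟨T, hT⟩ := eventually_atBot.mp
    (hd.and ((tendsto_zero_iff_norm_tendsto_zero.mp h'0).eventually
      (eventually_le_nhds (half_pos hc))))
  have hslope : ∀ τ ≤ min T 0, ‖h τ‖ ≤ ‖h (min T 0)‖ + c / 2 * ‖τ‖ := by
    intro τ hτ
    have hmvt := norm_image_sub_le_of_norm_deriv_le_segment' (f := h) (f' := h') (C := c / 2)
      (fun x hx => (hT x (hx.2.trans (min_le_left _ _))).1.hasDerivWithinAt)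
      (fun x hx => (hT x (hx.2.le.trans (min_le_left _ _))).2) (min T 0) ⟨hτ, le_rfl⟩
    rw [norm_sub_rev] at hmvt
    have hgap : min T 0 - τ ≤ ‖τ‖ := by
      rw [Real.norm_of_nonpos (hτ.trans (min_le_right _ _))]; linarith [min_le_right T 0]
    calc ‖h τ‖ ≤ ‖h (min T 0)‖ + ‖h τ - h (min T 0)‖ := norm_le_norm_add_norm_sub' _ _
      _ ≤ ‖h (min T 0)‖ + c / 2 * ‖τ‖ := by gcongr; exact hmvt.trans (by gcongr)
  filter_upwards [eventually_le_atBot (min T 0),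
    (isLittleO_const_id_atBot (h (min T 0))).def (half_pos hc)] with τ hτ hconst
  calc ‖h τ‖ ≤ ‖h (min T 0)‖ + c / 2 * ‖τ‖ := hslope τ hτ
    _ ≤ c * ‖id τ‖ := by simp only [id] at hconst ⊢; linarith

theorem tendsto_div_atBot_of_tendsto_deriv {f f' : ℝ → ℝ} {L : ℝ}
    (hd : ∀ᶠ τ in atBot, HasDerivAt f (f' τ) τ) (hL : Tendsto f' atBot (𝓝 L)) :
    Tendsto (fun τ => f τ / τ) atBot (𝓝 L) := by
  have hsub : (fun τ => f τ - L * τ) =o[atBot] id := by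
    refine isLittleO_id_atBot_of_tendsto_deriv_zero (h' := fun τ => f' τ - L) ?_ ?_
    · filter_upwards [hd] with τ hτ
      exact hτ.sub (((hasDerivAt_id τ).const_mul L).congr_deriv (mul_one L))
    · simpa using hL.sub_const L
  have hlim := hsub.tendsto_div_nhds_zero.add_const L
  rw [zero_add] at hlim
  refine hlim.congr' ?_
  filter_upwards [eventually_lt_atBot 0] with τ hτ
  rw [id, sub_div, mul_div_cancel_right₀ _ hτ.ne, sub_add_cancel]

theorem tendsto_div_zero_of_abs_le_mul {α : Type*} {l : Filter α} {g ε r : α → ℝ}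
    (hr : ∀ᶠ x in l, 0 < r x) (hg : ∀ᶠ x in l, |g x| ≤ ε x * r x)
    (hε : Tendsto ε l (𝓝 0)) : Tendsto (fun x => g x / r x) l (𝓝 0) := by
  refine squeeze_zero_norm' ?_ hε
  filter_upwards [hr, hg] with x hrx hgx
  rwa [Real.norm_eq_abs, abs_div, abs_of_pos hrx, div_le_iff₀ hrx]

theorem HasDerivAt.inv_pow_s16 {ρ : ℝ → ℝ} {ρ' τ : ℝ} (hρ : HasDerivAt ρ ρ' τ) (hρ0 : ρ τ ≠ 0)
    (n : ℕ) : HasDerivAt (fun t => (ρ t ^ n)⁻¹) (-n * (ρ' / ρ τ ^ (n + 1))) τ := by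
  refine ((hρ.pow n).inv (pow_ne_zero n hρ0)).congr_deriv ?_
  rcases n with _ | n
  · simp
  · simp only [Pi.pow_apply]
    field_simp
    push_cast
    ring

theorem radial_rate_along_characteristic_general (m : ℕ) (hm : 2 ≤ m)
    (Φ : ℝ → ℝ) (hΦc : Continuous Φ)
    (ϑ₀ τ₀ : ℝ)
    (ρ ϑ g ε : ℝ → ℝ)
    (hρpos : ∀ τ ≤ τ₀, 0 < ρ τ)
    (hϑ : Tendsto ϑ atBot (nhds ϑ₀))
    (hderiv : ∀ τ ≤ τ₀, HasDerivAt ρ (ρ τ ^ m * Φ (ϑ τ) + g τ) τ)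
    (hg : ∀ τ ≤ τ₀, |g τ| ≤ ε τ * ρ τ ^ m)
    (hε : Tendsto ε atBot (nhds 0)) :
    Tendsto (fun τ => 1 / (τ * ρ τ ^ (m - 1))) atBot
      (nhds ((1 - (m : ℝ)) * Φ ϑ₀)) := by
  obtain ⟨n, rfl⟩ : ∃ n, m = n + 1 := ⟨m - 1, by omega⟩
  have hρ : ∀ᶠ τ in atBot, 0 < ρ τ := eventually_atBot.mpr ⟨τ₀, hρpos⟩
  have hrate : Tendsto (fun τ => (ρ τ ^ (n + 1) * Φ (ϑ τ) + g τ) / ρ τ ^ (n + 1)) atBot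
      (𝓝 (Φ ϑ₀)) := by
    have hgρ := tendsto_div_zero_of_abs_le_mul (hρ.mono fun τ h => pow_pos h (n + 1))
      (eventually_atBot.mpr ⟨τ₀, hg⟩) hε
    rw [← add_zero (Φ ϑ₀)]
    refine (((hΦc.tendsto ϑ₀).comp hϑ).add hgρ).congr' ?_
    filter_upwards [hρ] with τ hτ
    simp [add_div, (pow_pos hτ (n + 1)).ne']
  have hF := tendsto_div_atBot_of_tendsto_deriv
    (eventually_atBot.mpr ⟨τ₀, fun τ hτ => (hderiv τ hτ).inv_pow_s16 (hρpos τ hτ).ne' n⟩)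
    (hrate.const_mul (-n : ℝ))
  convert hF using 2 with τ
  · simp [div_eq_mul_inv, mul_comm]
  · push_cast; ring

/-- Radial decay rate along a characteristic direction ϑ₀ with Φ(ϑ₀) ≠ 0:
1/(τ ρ^{m−1}) → (1−m) Φ(ϑ₀) as τ → −∞. -/
theorem radial_rate_along_characteristic (m : ℕ) (hm : 2 ≤ m)
    (Φ Ψ : ℝ → ℝ) (hΦc : Continuous Φ) (hΨc : Continuous Ψ)
    (ϑ₀ τ₀ : ℝ) (hΨ0 : Ψ ϑ₀ = 0) (hΦ0 : Φ ϑ₀ ≠ 0)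
    (ρ ϑ g ε : ℝ → ℝ)
    (hρpos : ∀ τ ≤ τ₀, 0 < ρ τ)
    (hρ0 : Tendsto ρ atBot (nhds 0))
    (hϑ : Tendsto ϑ atBot (nhds ϑ₀))
    (hderiv : ∀ τ ≤ τ₀, HasDerivAt ρ (ρ τ ^ m * Φ (ϑ τ) + g τ) τ)
    (hg : ∀ τ ≤ τ₀, |g τ| ≤ ε τ * ρ τ ^ m)
    (hε : Tendsto ε atBot (nhds 0)) :
    Tendsto (fun τ => 1 / (τ * ρ τ ^ (m - 1))) atBot
      (nhds ((1 - (m : ℝ)) * Φ ϑ₀)) :=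
  radial_rate_along_characteristic_general m hm Φ hΦc ϑ₀ τ₀ ρ ϑ g ε hρpos hϑ hderiv hg hε
end

section
/- Let σ > 0, and suppose u : (−∞, τ₀] → ℝ^d satisfies ‖u(τ)‖ ≤ ϖ₁·e^{στ} for all τ ≤ τ₀ with ϖ₁·e^{στ₀} < ρ, and let f(x) = Σ_{|α|≥2} c_α x^α be an absolutely convergent power series on the ball of radius ρ with coefficient bounds |c_α| ≤ ϖ₂/ρ^{|α|}. Then there is a constant ϖ₃ > 0 such that |f(u(τ))| ≤ ϖ₃·e^{2στ} for all τ ≤ τ₀; consequently, if θ′(τ) = f(u(τ)), then θ(τ) converges as τ → −∞. -/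
open Filter

set_option maxHeartbeats 2000000 in
/-- Exponential decay of an analytic function (vanishing to second order) along
an exponentially decaying orbit: |f(u(τ))| ≤ ϖ₃ e^{2στ}; hence any θ with
θ′ = f ∘ u converges as τ → −∞. -/
theorem quadratic_series_exponential_bound (d : ℕ) (σ τ₀ ϖ₁ ϖ₂ ρ : ℝ)
    (hσ : 0 < σ) (hϖ₁ : 0 < ϖ₁) (hϖ₂ : 0 < ϖ₂) (hρ : 0 < ρ)
    (u : ℝ → (Fin d → ℝ))
    (hu : ∀ τ ≤ τ₀, ‖u τ‖ ≤ ϖ₁ * Real.exp (σ * τ))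
    (hsmall : ϖ₁ * Real.exp (σ * τ₀) < ρ)
    (c : (Fin d → ℕ) → ℝ)
    (hc0 : ∀ α : Fin d → ℕ, (∑ i, α i) < 2 → c α = 0)
    (hcb : ∀ α : Fin d → ℕ, |c α| ≤ ϖ₂ / ρ ^ (∑ i, α i))
    (f : (Fin d → ℝ) → ℝ)
    (hconv : ∀ x : Fin d → ℝ, ‖x‖ < ρ →
      Summable (fun α : Fin d → ℕ => |c α * ∏ i, x i ^ α i|))
    (hf : ∀ x : Fin d → ℝ, ‖x‖ < ρ →
      f x = ∑' α : Fin d → ℕ, c α * ∏ i, x i ^ α i) :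
    (∃ ϖ₃ : ℝ, 0 < ϖ₃ ∧ ∀ τ ≤ τ₀, |f (u τ)| ≤ ϖ₃ * Real.exp (2 * σ * τ))
    ∧ ∀ θ : ℝ → ℝ, (∀ τ ≤ τ₀, HasDerivAt θ (f (u τ)) τ) →
        ∃ L : ℝ, Tendsto θ atBot (nhds L) := by
  set r : ℝ := ϖ₁ * Real.exp (σ * τ₀) with hr_def
  have hr : 0 < r := by positivity
  -- summability at the constant point y = (r, ..., r)
  have hynorm : ‖(fun _ : Fin d => r : Fin d → ℝ)‖ < ρ := by
    refine lt_of_le_of_lt ?_ hsmall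
    exact (pi_norm_le_iff_of_nonneg hr.le).2
      (fun i => by simp [Real.norm_eq_abs, abs_of_pos hr])
  have hgeq : ∀ α : Fin d → ℕ,
      |c α * ∏ i, (fun _ : Fin d => r : Fin d → ℝ) i ^ α i|
        = |c α| * r ^ (∑ i, α i) := by
    intro α
    simp only [Finset.prod_pow_eq_pow_sum, abs_mul, abs_pow, abs_of_pos hr]
  have hg : Summable (fun α : Fin d → ℕ => |c α| * r ^ (∑ i, α i)) := by
    have := hconv _ hynorm
    simpa only [hgeq] using this
  clear_value r
  set M : ℝ := ∑' α : Fin d → ℕ, |c α| * r ^ (∑ i, α i) with hM_def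
  have hM : 0 ≤ M := tsum_nonneg fun α => by positivity
  clear_value M
  set ϖ₃ : ℝ := ϖ₁ ^ 2 * M / r ^ 2 + 1 with hϖ₃_def
  have hϖ₃ : 0 < ϖ₃ := by
    rw [hϖ₃_def]
    have h := div_nonneg (by nlinarith : (0:ℝ) ≤ ϖ₁ ^ 2 * M)
      (by positivity : (0:ℝ) ≤ r ^ 2)
    linarith
  clear_value ϖ₃
  -- main pointwise bound
  have key : ∀ τ ≤ τ₀, |f (u τ)| ≤ ϖ₃ * Real.exp (2 * σ * τ) := by
    intro τ hτ
    set s : ℝ := ϖ₁ * Real.exp (σ * τ) with hs_def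
    have hs : 0 < s := by positivity
    have hsr : s ≤ r := by
      rw [hs_def, hr_def]
      exact mul_le_mul_of_nonneg_left
        (Real.exp_le_exp.2 (mul_le_mul_of_nonneg_left hτ hσ.le)) hϖ₁.le
    have hx : ‖u τ‖ < ρ := lt_of_le_of_lt (le_trans (hu τ hτ) hsr) hsmall
    have hxs : ‖u τ‖ ≤ s := hu τ hτ
    have hsum1 := hconv _ hx
    have hsum2 : Summable (fun α : Fin d → ℕ =>
        (s ^ 2 / r ^ 2) * (|c α| * r ^ (∑ i, α i))) := hg.mul_left _
    have hterm : ∀ α : Fin d → ℕ,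
        |c α * ∏ i, (u τ) i ^ α i|
          ≤ (s ^ 2 / r ^ 2) * (|c α| * r ^ (∑ i, α i)) := by
      intro α
      by_cases h2 : (∑ i, α i) < 2
      · rw [hc0 α h2]
        simp only [zero_mul, abs_zero]
        positivity
      · push_neg at h2
        set n := ∑ i, α i with hn_def
        have h1 : |c α * ∏ i, (u τ) i ^ α i| ≤ |c α| * ‖u τ‖ ^ n := by
          rw [abs_mul]
          refine mul_le_mul_of_nonneg_left ?_ (abs_nonneg _)
          calc |∏ i, (u τ) i ^ α i| = ∏ i, |(u τ) i| ^ α i := by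
                rw [Finset.abs_prod]; simp [abs_pow]
            _ ≤ ∏ i, ‖u τ‖ ^ α i := by
                refine Finset.prod_le_prod (fun i _ => by positivity) ?_
                intro i _
                exact pow_le_pow_left₀ (abs_nonneg _)
                  (by simpa [Real.norm_eq_abs] using norm_le_pi_norm (u τ) i) _
            _ = ‖u τ‖ ^ n := Finset.prod_pow_eq_pow_sum _ _ _
        have h3 : ‖u τ‖ ^ n ≤ s ^ 2 * r ^ (n - 2) := by
          have h4 : ‖u τ‖ ^ n ≤ s ^ n :=
            pow_le_pow_left₀ (norm_nonneg _) hxs n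
          have h5 : s ^ n = s ^ 2 * s ^ (n - 2) := by
            rw [← pow_add]; congr 1; omega
          have h6 : s ^ (n - 2) ≤ r ^ (n - 2) := pow_le_pow_left₀ hs.le hsr _
          calc ‖u τ‖ ^ n ≤ s ^ n := h4
            _ = s ^ 2 * s ^ (n - 2) := h5
            _ ≤ s ^ 2 * r ^ (n - 2) := by nlinarith
        have h7 : (s ^ 2 / r ^ 2) * (|c α| * r ^ n)
            = |c α| * (s ^ 2 * r ^ (n - 2)) := by
          have : r ^ n = r ^ 2 * r ^ (n - 2) := by
            rw [← pow_add]; congr 1; omega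
          rw [this]; field_simp
        rw [h7]
        calc |c α * ∏ i, (u τ) i ^ α i| ≤ |c α| * ‖u τ‖ ^ n := h1
          _ ≤ |c α| * (s ^ 2 * r ^ (n - 2)) :=
            mul_le_mul_of_nonneg_left h3 (abs_nonneg _)
    have habs : |f (u τ)| ≤ ∑' α : Fin d → ℕ, |c α * ∏ i, (u τ) i ^ α i| := by
      rw [hf _ hx]
      have h := norm_tsum_le_tsum_norm
        (f := fun α : Fin d → ℕ => c α * ∏ i, (u τ) i ^ α i)
        (by simpa only [Real.norm_eq_abs] using hsum1)
      simpa only [Real.norm_eq_abs] using h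
    have hexp2 : Real.exp (σ * τ) ^ 2 = Real.exp (2 * σ * τ) := by
      rw [← Real.exp_nat_mul]; norm_num; ring_nf
    calc |f (u τ)| ≤ ∑' α : Fin d → ℕ, |c α * ∏ i, (u τ) i ^ α i| := habs
      _ ≤ ∑' α : Fin d → ℕ, (s ^ 2 / r ^ 2) * (|c α| * r ^ (∑ i, α i)) :=
          Summable.tsum_le_tsum hterm hsum1 hsum2
      _ = (s ^ 2 / r ^ 2) * M := by rw [tsum_mul_left, ← hM_def]
      _ = (ϖ₁ ^ 2 * M / r ^ 2) * Real.exp (2 * σ * τ) := by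
          rw [hs_def, mul_pow, hexp2]; ring
      _ ≤ ϖ₃ * Real.exp (2 * σ * τ) := by
          have h8 : (0:ℝ) < Real.exp (2 * σ * τ) := Real.exp_pos _
          have h9 : ϖ₁ ^ 2 * M / r ^ 2 ≤ ϖ₃ := by rw [hϖ₃_def]; linarith
          nlinarith
  refine ⟨⟨ϖ₃, hϖ₃, key⟩, ?_⟩
  -- convergence part
  intro θ hθ
  set q : ℝ := Real.exp (-(2 * σ)) with hq_def
  have hq0 : 0 < q := Real.exp_pos _
  have hq1 : q < 1 := Real.exp_lt_one_iff.2 (by linarith)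
  clear_value q
  -- one-step bound via MVT
  have step : ∀ a b : ℝ, a ≤ b → b ≤ τ₀ →
      |θ b - θ a| ≤ (ϖ₃ * Real.exp (2 * σ * b)) * (b - a) := by
    intro a b hab hbτ
    have := Convex.norm_image_sub_le_of_norm_hasDerivWithin_le
      (f := θ) (f' := fun x => f (u x)) (C := ϖ₃ * Real.exp (2 * σ * b))
      (s := Set.Icc a b)
      (fun x hx => ((hθ x (le_trans hx.2 hbτ)).hasDerivWithinAt))
      (fun x hx => by
        have h1 := key x (le_trans hx.2 hbτ)
        have h2 : Real.exp (2 * σ * x) ≤ Real.exp (2 * σ * b) :=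
          Real.exp_le_exp.2 (by nlinarith [hx.2])
        simp only [Real.norm_eq_abs]
        nlinarith)
      (convex_Icc a b) (Set.left_mem_Icc.2 hab) (Set.right_mem_Icc.2 hab)
    simpa [Real.norm_eq_abs, abs_of_nonneg (sub_nonneg.2 hab)] using this
  -- geometric chaining
  have chain : ∀ n : ℕ, ∀ a b : ℝ, a ≤ b → b ≤ τ₀ → b - a ≤ n →
      |θ b - θ a| ≤ ϖ₃ * Real.exp (2 * σ * b) * (∑ k ∈ Finset.range n, q ^ k) := by
    intro n
    induction n with
    | zero =>
      intro a b hab hbτ hle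
      have : a = b := by norm_num at hle; linarith
      simp [this]
    | succ n ih =>
      intro a b hab hbτ hle
      have hq0' : (0:ℝ) ≤ q := hq0.le
      have hSn : (0:ℝ) ≤ ∑ k ∈ Finset.range n, q ^ k :=
        Finset.sum_nonneg fun k _ => by positivity
      have hEpos : (0:ℝ) ≤ ϖ₃ * Real.exp (2 * σ * b) := by positivity
      by_cases hcase : b - 1 ≤ a
      · -- single step suffices
        have h1 := step a b hab hbτ
        have hS1 : (1:ℝ) ≤ ∑ k ∈ Finset.range (n + 1), q ^ k := by
          rw [geom_sum_succ]
          nlinarith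
        calc |θ b - θ a| ≤ ϖ₃ * Real.exp (2 * σ * b) * (b - a) := h1
          _ ≤ ϖ₃ * Real.exp (2 * σ * b) * 1 :=
              mul_le_mul_of_nonneg_left (by linarith) hEpos
          _ ≤ ϖ₃ * Real.exp (2 * σ * b) * (∑ k ∈ Finset.range (n + 1), q ^ k) :=
              mul_le_mul_of_nonneg_left hS1 hEpos
      · push_neg at hcase
        obtain ⟨m, hm_def⟩ : ∃ m : ℝ, m = b - 1 := ⟨_, rfl⟩
        have hma : a ≤ m := by rw [hm_def]; linarith
        have hmb : m ≤ b := by rw [hm_def]; linarith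
        have hmτ : m ≤ τ₀ := by rw [hm_def]; linarith
        have hman : m - a ≤ n := by rw [hm_def]; push_cast at hle ⊢; linarith
        have h1 : |θ b - θ m| ≤ ϖ₃ * Real.exp (2 * σ * b) := by
          have hst := step m b hmb hbτ
          calc |θ b - θ m| ≤ ϖ₃ * Real.exp (2 * σ * b) * (b - m) := hst
            _ ≤ ϖ₃ * Real.exp (2 * σ * b) * 1 :=
                mul_le_mul_of_nonneg_left (by linarith) hEpos
            _ = ϖ₃ * Real.exp (2 * σ * b) := mul_one _
        have h4 : Real.exp (2 * σ * m) = Real.exp (2 * σ * b) * q := by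
          have he : 2 * σ * m = 2 * σ * b + -(2 * σ) := by rw [hm_def]; ring
          rw [he, Real.exp_add, hq_def]
        have h2 : |θ m - θ a| ≤ ϖ₃ * Real.exp (2 * σ * b) * q *
            (∑ k ∈ Finset.range n, q ^ k) := by
          have h3 := ih a m hma hmτ hman
          calc |θ m - θ a| ≤ ϖ₃ * Real.exp (2 * σ * m) *
                (∑ k ∈ Finset.range n, q ^ k) := h3
            _ = ϖ₃ * Real.exp (2 * σ * b) * q *
                (∑ k ∈ Finset.range n, q ^ k) := by rw [h4]; ring
        have hsumeq : (∑ k ∈ Finset.range (n + 1), q ^ k)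
            = 1 + q * ∑ k ∈ Finset.range n, q ^ k := by
          rw [geom_sum_succ]; ring
        calc |θ b - θ a| ≤ |θ b - θ m| + |θ m - θ a| := abs_sub_le (θ b) (θ m) (θ a)
          _ ≤ ϖ₃ * Real.exp (2 * σ * b) + ϖ₃ * Real.exp (2 * σ * b) * q *
                (∑ k ∈ Finset.range n, q ^ k) := by linarith
          _ = ϖ₃ * Real.exp (2 * σ * b) * (∑ k ∈ Finset.range (n + 1), q ^ k) := by
              rw [hsumeq]; ring
  -- uniform global bound
  set K : ℝ := ϖ₃ / (1 - q) with hK_def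
  have hK : 0 < K := by rw [hK_def]; exact div_pos hϖ₃ (by linarith)
  clear_value K
  have global : ∀ a b : ℝ, a ≤ b → b ≤ τ₀ →
      |θ b - θ a| ≤ K * Real.exp (2 * σ * b) := by
    intro a b hab hbτ
    have hn := Nat.le_ceil (b - a)
    have h1 := chain ⌈b - a⌉₊ a b hab hbτ hn
    have h2 : (∑ k ∈ Finset.range ⌈b - a⌉₊, q ^ k) ≤ 1 / (1 - q) := by
      have hgs := geom_sum_mul q ⌈b - a⌉₊
      have h' : (∑ k ∈ Finset.range ⌈b - a⌉₊, q ^ k) * (1 - q)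
          = 1 - q ^ ⌈b - a⌉₊ := by linear_combination -hgs
      have hqn : 0 ≤ q ^ ⌈b - a⌉₊ := by positivity
      rw [le_div_iff₀ (by linarith : (0:ℝ) < 1 - q), h']
      linarith
    have h3 : (0:ℝ) < Real.exp (2 * σ * b) := Real.exp_pos _
    calc |θ b - θ a| ≤ ϖ₃ * Real.exp (2 * σ * b) *
          (∑ k ∈ Finset.range ⌈b - a⌉₊, q ^ k) := h1
      _ ≤ ϖ₃ * Real.exp (2 * σ * b) * (1 / (1 - q)) :=
          mul_le_mul_of_nonneg_left h2 (by positivity)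
      _ = K * Real.exp (2 * σ * b) := by rw [hK_def]; ring
  -- the sequence θ(τ₀ - n) is Cauchy
  set s : ℕ → ℝ := fun n => θ (τ₀ - n) with hs_def
  clear_value s
  have hexpn : ∀ n : ℕ, Real.exp (2 * σ * (τ₀ - n)) = Real.exp (2 * σ * τ₀) * q ^ n := by
    intro n
    rw [hq_def, ← Real.exp_nat_mul, ← Real.exp_add]
    ring_nf
  have hcs : CauchySeq s := by
    apply cauchySeq_of_le_geometric q (K * Real.exp (2 * σ * τ₀)) hq1
    intro n
    have h1 := global (τ₀ - (n + 1)) (τ₀ - n) (by push_cast; linarith)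
      (by linarith [Nat.cast_nonneg (α := ℝ) n])
    rw [Real.dist_eq]
    calc |s n - s (n + 1)| = |θ (τ₀ - n) - θ (τ₀ - (n + 1 : ℕ))| := by
          simp [hs_def]
      _ ≤ K * Real.exp (2 * σ * (τ₀ - n)) := by
          convert h1 using 3 <;> push_cast <;> ring
      _ = K * Real.exp (2 * σ * τ₀) * q ^ n := by rw [hexpn]; ring
  obtain ⟨L, hL⟩ := cauchySeq_tendsto_of_complete hcs
  refine ⟨L, ?_⟩
  rw [Metric.tendsto_nhds]
  intro ε hε
  -- choose n with K e^{2σ(τ₀-n)} < ε/2 and dist (s n) L < ε/2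
  have hten : Tendsto (fun n : ℕ => K * Real.exp (2 * σ * τ₀) * q ^ n) atTop (nhds 0) := by
    have h := (tendsto_pow_atTop_nhds_zero_of_lt_one hq0.le hq1).const_mul
      (K * Real.exp (2 * σ * τ₀))
    rw [mul_zero] at h
    exact h
  have h1 : ∀ᶠ n : ℕ in atTop, K * Real.exp (2 * σ * τ₀) * q ^ n < ε / 2 :=
    hten.eventually_lt_const (show (0:ℝ) < ε / 2 by linarith)
  have h2 : ∀ᶠ n : ℕ in atTop, dist (s n) L < ε / 2 :=
    (Metric.tendsto_atTop.1 hL (ε / 2) (by linarith)).imp (by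
      intro N h
      exact fun n hn => h n hn) |>.elim fun N hN =>
        eventually_atTop.2 ⟨N, hN⟩
  obtain ⟨n, hn1, hn2⟩ := (h1.and h2).exists
  rw [eventually_atBot]
  refine ⟨τ₀ - n, fun τ hτ => ?_⟩
  have hτ0 : τ ≤ τ₀ := by
    have : (0:ℝ) ≤ n := Nat.cast_nonneg n
    linarith
  have hg1 : |θ (τ₀ - n) - θ τ| ≤ K * Real.exp (2 * σ * (τ₀ - n)) :=
    global τ (τ₀ - n) hτ (by linarith [Nat.cast_nonneg (α := ℝ) n])
  have hg2 : K * Real.exp (2 * σ * (τ₀ - n)) < ε / 2 := by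
    rw [hexpn]; linarith [hn1]
  calc dist (θ τ) L ≤ dist (θ τ) (s n) + dist (s n) L := dist_triangle _ _ _
    _ < ε / 2 + ε / 2 := by
        apply add_lt_add_of_lt_of_le _ hn2.le |>.trans_le le_rfl
        rw [Real.dist_eq]
        calc |θ τ - s n| = |θ (τ₀ - n) - θ τ| := by rw [abs_sub_comm]; simp [hs_def]
          _ < ε / 2 := lt_of_le_of_lt hg1 hg2
    _ = ε := by ring
end

section
/- For τ ∈ ℝ, there is a unique u(τ) > 0 satisfying 1/u + arctan(u) = e^τ + π/2, and setting v(τ) = e^τ, the pair (u(τ), v(τ)) is a solution of the system u′ = −u²(u² + 1)·v, v′ = v. Moreover v(τ) → 0 while u(τ) → +∞ as τ → −∞. -/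
/-!
On `(0, ∞)` the function `h u = 1 / u + arctan u` decreases strictly from `+∞` to `π / 2`
(its derivative is `-1 / (u² (u² + 1))`), which gives the unique solution `u τ`. The inverse of
`τ ↦ u τ` is explicit, `τ = log (h u - π / 2)`; it is strictly decreasing with nonvanishing
derivative. Hence `u` is a strictly decreasing bijection of `ℝ` onto `(0, ∞)`, so it is
continuous, differentiable by the inverse function rule, and tends to `+∞` as `τ → -∞`.
-/

open Filter Real Set Function Topology

theorem Antitone.continuousAt_of_range_mem_nhds {α β : Type*} [LinearOrder α]
    [TopologicalSpace α] [OrderTopology α] [LinearOrder β] [TopologicalSpace β] [OrderTopology β]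
    [DenselyOrdered β] {u : α → β} (hu : Antitone u) {a : α} (h : range u ∈ 𝓝 (u a)) : ContinuousAt u a :=
  continuousAt_of_monotoneOn_of_image_mem_nhds (f := OrderDual.toDual ∘ u)
    (fun _ _ _ _ hxy => hu hxy) univ_mem (by rwa [image_univ])

theorem StrictAntiOn.strictAnti_of_leftInverse {α β : Type*} [LinearOrder α] [LinearOrder β]
    {ψ : α → β} {u : β → α} {s : Set α} (hψ : StrictAntiOn ψ s) (hu : ∀ b, u b ∈ s)
    (hψu : LeftInverse ψ u) : StrictAnti u := by
  intro a b hab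
  by_contra! hle
  have := (hψ.le_iff_ge (hu b) (hu a)).2 hle
  rw [hψu, hψu] at this
  exact hab.not_ge this

theorem Real.arctan_lt_self {x : ℝ} (hx : 0 < x) : arctan x < x := by
  simpa only [tan_arctan] using lt_tan (arctan_pos.2 hx) (arctan_lt_pi_div_two x)

noncomputable def invAddArctan (x : ℝ) : ℝ := 1 / x + arctan x

theorem hasDerivAt_invAddArctan {x : ℝ} (hx : x ≠ 0) :
    HasDerivAt invAddArctan (-(x ^ 2 * (x ^ 2 + 1))⁻¹) x := by
  have h : HasDerivAt (fun y => y⁻¹ + arctan y) (-(x ^ 2)⁻¹ + (1 + x ^ 2)⁻¹) x :=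
    (hasDerivAt_inv hx).add (hasDerivAt_arctan' x)
  unfold invAddArctan
  simp only [one_div]
  convert h using 1
  field_simp
  ring

theorem strictAntiOn_invAddArctan : StrictAntiOn invAddArctan (Ioi 0) := by
  refine strictAntiOn_of_deriv_neg (convex_Ioi 0)
    (fun x hx => (hasDerivAt_invAddArctan hx.ne').continuousAt.continuousWithinAt) ?_
  rw [interior_Ioi]
  intro x (hx : 0 < x)
  rw [(hasDerivAt_invAddArctan hx.ne').deriv, neg_lt_zero]
  positivity

theorem pi_div_two_lt_invAddArctan {x : ℝ} (hx : 0 < x) : π / 2 < invAddArctan x := by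
  have h := arctan_lt_self (inv_pos.2 hx)
  rw [arctan_inv_of_pos hx] at h
  rw [invAddArctan, one_div]
  linarith

theorem surjOn_invAddArctan : SurjOn invAddArctan (Ioi 0) (Ioi (π / 2)) := by
  intro y (hy : π / 2 < y)
  have hy0 : 0 < y := by linarith [pi_pos]
  set a := 1 / y
  set b := 1 / (y - π / 2)
  have ha : 0 < a := by positivity
  have hab : a ≤ b := one_div_le_one_div_of_le (by linarith) (by linarith [pi_pos])
  have hcont : ContinuousOn invAddArctan (Icc a b) := fun x hx =>
    (hasDerivAt_invAddArctan (ha.trans_le hx.1).ne').continuousAt.continuousWithinAt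
  -- at `a` the term `1 / a` alone is `y`; at `b` it is `y - π / 2`, and `arctan b < π / 2`
  have hya : y < invAddArctan a := by
    simpa [invAddArctan, a] using arctan_pos.2 ha
  have hyb : invAddArctan b < y := by
    have := arctan_lt_pi_div_two b
    simp only [invAddArctan, b, one_div_one_div]
    linarith
  obtain ⟨x, hx, rfl⟩ := intermediate_value_Ioo' hab hcont ⟨hyb, hya⟩
  exact ⟨x, ha.trans hx.1, rfl⟩

theorem existsUnique_invAddArctan_eq {y : ℝ} (hy : π / 2 < y) :
    ∃! x : ℝ, 0 < x ∧ invAddArctan x = y := by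
  obtain ⟨x, hx, rfl⟩ := surjOn_invAddArctan hy
  exact ⟨x, ⟨hx, rfl⟩, fun z hz => strictAntiOn_invAddArctan.injOn hz.1 hx hz.2⟩

/-- The time at which a solution of `1 / u + arctan u = exp τ + π / 2` passes through `u = x`. -/
noncomputable def arrivalTime (x : ℝ) : ℝ := log (invAddArctan x - π / 2)

theorem hasDerivAt_arrivalTime {x : ℝ} (hx : 0 < x) :
    HasDerivAt arrivalTime (-(x ^ 2 * (x ^ 2 + 1))⁻¹ / (invAddArctan x - π / 2)) x :=
  ((hasDerivAt_invAddArctan hx.ne').sub_const (π / 2)).log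
    (sub_pos.2 (pi_div_two_lt_invAddArctan hx)).ne'

theorem strictAntiOn_arrivalTime : StrictAntiOn arrivalTime (Ioi 0) := fun _ ha _ hb hab =>
  strictMonoOn_log (sub_pos.2 (pi_div_two_lt_invAddArctan hb))
    (sub_pos.2 (pi_div_two_lt_invAddArctan ha))
    (sub_lt_sub_right (strictAntiOn_invAddArctan ha hb hab) _)

def IsImplicitSolution (u : ℝ → ℝ) : Prop :=
  ∀ τ, 0 < u τ ∧ invAddArctan (u τ) = exp τ + π / 2

namespace IsImplicitSolution

variable {u : ℝ → ℝ}

theorem leftInverse (hu : IsImplicitSolution u) : LeftInverse arrivalTime u := fun τ => by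
  rw [arrivalTime, (hu τ).2, add_sub_cancel_right, log_exp]

theorem apply_arrivalTime (hu : IsImplicitSolution u) {x : ℝ} (hx : 0 < x) :
    u (arrivalTime x) = x := by
  refine strictAntiOn_invAddArctan.injOn (hu _).1 hx ?_
  rw [(hu _).2, arrivalTime, exp_log (sub_pos.2 (pi_div_two_lt_invAddArctan hx)),
    sub_add_cancel]

theorem range_eq (hu : IsImplicitSolution u) : range u = Ioi 0 :=
  Subset.antisymm (range_subset_iff.2 fun τ => (hu τ).1)
    fun _ hx => ⟨_, hu.apply_arrivalTime hx⟩

theorem strictAnti (hu : IsImplicitSolution u) : StrictAnti u :=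
  strictAntiOn_arrivalTime.strictAnti_of_leftInverse (fun τ => (hu τ).1) hu.leftInverse

theorem continuous (hu : IsImplicitSolution u) : Continuous u :=
  continuous_iff_continuousAt.2 fun τ => hu.strictAnti.antitone.continuousAt_of_range_mem_nhds
    (hu.range_eq ▸ Ioi_mem_nhds (hu τ).1)

theorem hasDerivAt (hu : IsImplicitSolution u) (τ : ℝ) :
    HasDerivAt u (-(u τ) ^ 2 * ((u τ) ^ 2 + 1) * exp τ) τ := by
  have hu0 := (hu τ).1
  have hd := hasDerivAt_arrivalTime hu0
  rw [(hu τ).2, add_sub_cancel_right] at hd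
  have h := hd.of_local_left_inverse hu.continuous.continuousAt
    (div_ne_zero (neg_ne_zero.2 (by positivity)) (exp_pos τ).ne')
    (Eventually.of_forall hu.leftInverse)
  refine h.congr_deriv ?_
  rw [inv_div, div_neg, div_inv_eq_mul]
  ring

theorem tendsto_atBot_atTop (hu : IsImplicitSolution u) : Tendsto u atBot atTop :=
  tendsto_atBot_atTop_of_antitone hu.strictAnti.antitone fun M =>
    ⟨arrivalTime (max M 1),
      (hu.apply_arrivalTime (lt_max_of_lt_right one_pos)).symm ▸ le_max_left M 1⟩

end IsImplicitSolution

/-- Example 1: the implicit solution 1/u + arctan u = e^τ + π/2 of the system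
u′ = −u²(u²+1)v, v′ = v (with v = e^τ) exists and is unique, satisfies the
ODE, and u → +∞ while v → 0 as τ → −∞. -/
theorem example1_spiralless_counterexample :
    (∀ τ : ℝ, ∃! u : ℝ, 0 < u ∧ 1 / u + Real.arctan u = Real.exp τ + π / 2)
    ∧ ∀ u : ℝ → ℝ,
        (∀ τ, 0 < u τ ∧ 1 / u τ + Real.arctan (u τ) = Real.exp τ + π / 2) →
        (∀ τ, HasDerivAt u (-(u τ) ^ 2 * ((u τ) ^ 2 + 1) * Real.exp τ) τ)
        ∧ Tendsto (fun τ => Real.exp τ) atBot (nhds 0)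
        ∧ Tendsto u atBot atTop :=
  ⟨fun τ => existsUnique_invAddArctan_eq (by linarith [exp_pos τ]),
    fun _ hu => ⟨IsImplicitSolution.hasDerivAt hu, tendsto_exp_atBot,
      IsImplicitSolution.tendsto_atBot_atTop hu⟩⟩
end
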